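/- Let p be a prime, d ≥ 1 a natural number, G a topological group, and S ⊆ G an infinite subset. Consider the set of continuous group homomorphisms from G to GL_d(ℚ_p) modulo the equivalence relation of conjugation (f ∼ g if there exists u ∈ GL_d(ℚ_p) with g(x) = u·f(x)·u⁻¹ for all x ∈ G). If this set of equivalence classes has cardinality strictly greater than 2^{#S}, then S does not topologically generate G; that is, the closure of the subgroup generated by S is a proper subgroup of G. -/

import Mathlib

open Cardinal

universe u

lemma padic_card_le (p : ℕ) [Fact p.Prime] : #ℚ_[p] ≤ 2 ^ ℵ₀ := by
  calc #ℚ_[p] ≤ #(CauSeq ℚ (padicNorm p)) := mk_quotient_le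
    _ ≤ #(ℕ → ℚ) := mk_subtype_le _
    _ = ℵ₀ ^ ℵ₀ := by simp [mk_arrow]
    _ ≤ 2 ^ ℵ₀ := by
        rw [← power_self_eq le_rfl]

lemma gl_card_le (p : ℕ) [Fact p.Prime] (d : ℕ) :
    #(GL (Fin d) ℚ_[p]) ≤ 2 ^ ℵ₀ := by
  calc #(GL (Fin d) ℚ_[p]) ≤ #(Matrix (Fin d) (Fin d) ℚ_[p]) :=
        mk_le_of_injective (fun a b h => Units.ext h)
    _ ≤ 2 ^ ℵ₀ := by
        have e : #(Matrix (Fin d) (Fin d) ℚ_[p]) = (#ℚ_[p] ^ (d : Cardinal)) ^ (d : Cardinal) := by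
          show #(Fin d → Fin d → ℚ_[p]) = _
          rw [mk_arrow, mk_arrow]; simp
        rw [e, ← power_mul]
        calc #ℚ_[p] ^ ((d : Cardinal) * d) ≤ (2 ^ ℵ₀) ^ ((d : Cardinal) * d) :=
              power_le_power_right (padic_card_le p)
          _ = 2 ^ (ℵ₀ * ((d : Cardinal) * d)) := power_mul.symm
          _ ≤ 2 ^ ℵ₀ := by
              refine power_le_power_left two_ne_zero ?_
              calc ℵ₀ * ((d : Cardinal) * d) ≤ ℵ₀ * (ℵ₀ * ℵ₀) := by
                    gcongr <;> exact (nat_lt_aleph0 d).le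
                _ = ℵ₀ := by rw [aleph0_mul_aleph0, aleph0_mul_aleph0]

/-- If `S ⊆ G` is infinite and the continuous homomorphisms `G → GL_d(ℚ_p)`,
taken up to conjugation by elements of `GL_d(ℚ_p)`, form a set of cardinality
strictly greater than `2^(#S)`, then `S` does not topologically generate `G`. -/
theorem stmt9 (p : ℕ) [Fact p.Prime] (d : ℕ) (hd : 1 ≤ d)
    (G : Type u) [Group G] [TopologicalSpace G] [IsTopologicalGroup G]
    (S : Set G) (hSinf : S.Infinite)
    (hcard : 2 ^ #S <
      #(Quot (fun (f g : {f : G →* GL (Fin d) ℚ_[p] // Continuous f}) =>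
        ∃ u : GL (Fin d) ℚ_[p], ∀ x : G, g.1 x = u * f.1 x * u⁻¹))) :
    closure ((Subgroup.closure S : Subgroup G) : Set G) ≠ Set.univ := by
  intro h
  have hdense : Dense ((Subgroup.closure S : Subgroup G) : Set G) :=
    dense_iff_closure_eq.mpr h
  -- restriction to S is injective on continuous homs
  have hinj : Function.Injective
      (fun (f : {f : G →* GL (Fin d) ℚ_[p] // Continuous f}) => (fun s : S => f.1 s)) := by
    intro f g hfg
    have hS : Set.EqOn f.1 g.1 S := fun x hx => congrFun hfg ⟨x, hx⟩
    have hcl : Set.EqOn f.1 g.1 ((Subgroup.closure S : Subgroup G) : Set G) :=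
      MonoidHom.eqOn_closure hS
    have : (f.1 : G → GL (Fin d) ℚ_[p]) = g.1 :=
      Continuous.ext_on hdense f.2 g.2 hcl
    exact Subtype.ext (MonoidHom.ext fun x => congrFun this x)
  have haleph : ℵ₀ ≤ #S := by haveI := hSinf.to_subtype; exact aleph0_le_mk S
  have h1 : #(Quot (fun (f g : {f : G →* GL (Fin d) ℚ_[p] // Continuous f}) =>
        ∃ u : GL (Fin d) ℚ_[p], ∀ x : G, g.1 x = u * f.1 x * u⁻¹)) ≤ 2 ^ #S := by
    refine mk_quot_le.trans ((mk_le_of_injective hinj).trans ?_)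
    calc #(S → GL (Fin d) ℚ_[p])
        = lift.{u} #(GL (Fin d) ℚ_[p]) ^ lift.{0} #S := mk_arrow _ _
      _ ≤ (2 ^ #S) ^ #S := by
          rw [lift_uzero]
          refine power_le_power_right ?_
          calc lift.{u} #(GL (Fin d) ℚ_[p]) ≤ lift.{u} (2 ^ ℵ₀) :=
                lift_le.2 (gl_card_le p d)
            _ = 2 ^ (ℵ₀ : Cardinal.{u}) := by simp
            _ ≤ 2 ^ #S := power_le_power_left two_ne_zero haleph
      _ = 2 ^ (#S * #S) := power_mul.symm
      _ = 2 ^ #S := by rw [mul_eq_self haleph]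
  exact absurd h1 (not_le.mpr hcard)
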